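/- Let M̂ be the collection of subsets S of N such that for every pair a, b ∈ N with d(a,b) = d_t(a,b) = 3, at least one of a, b is not in S. Then the prime ideals minimal over Ĵ^{⟨t⟩} are exactly the minimal ideals among {(x_a : a ∉ S) : S ∈ M̂}. -/

import Mathlib

/-!
`Ĵ^⟨t⟩` is the edge ideal of the graph on `N` joining `a` and `b` when `d(a,b) = d_t(a,b) = 3`,
because `x_a x_b` is half an alternating sum of three of the permanents generating it. The minimal
primes of an edge ideal over a domain are the minimal ideals among the variable ideals
`(x_a : a ∉ S)` of independent sets `S`: these ideals are prime and contain the edge ideal, and any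
prime `P` containing the edge ideal contains the variable ideal of the independent set
`{a | x_a ∉ P}`.
-/

open MvPolynomial Finset

/-- The index set `N = [r 1] × ⋯ × [r n]`, realized as dependent functions. -/
abbrev Idx {n : ℕ} (r : Fin n → ℕ) := ∀ i, Fin (r i)

variable {n : ℕ} {r : Fin n → ℕ}

/-- The switch `s(K,a,b)`: `b i` in the components of `K`, `a i` elsewhere. -/
def sw (K : Finset (Fin n)) (a b : Idx r) : Idx r := fun i => if i ∈ K then b i else a i

/-- The distance `d(a,b) = #{i : a i ≠ b i}`. -/
def hdist (a b : Idx r) : ℕ := (univ.filter fun i => a i ≠ b i).card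

/-- The truncated distance `d_t(a,b) = #{i ∈ [t] : a i ≠ b i}`. -/
def hdistT (t : ℕ) (a b : Idx r) : ℕ :=
  (univ.filter fun i : Fin n => (i : ℕ) < t ∧ a i ≠ b i).card

/-- `c : ℕ → N` is a path of length `m` from `a` to `b` inside `S`:
consecutive elements differ in exactly one component. -/
def IsPath (S : Set (Idx r)) (a b : Idx r) (m : ℕ) (c : ℕ → Idx r) : Prop :=
  c 0 = a ∧ c m = b ∧ (∀ j ≤ m, c j ∈ S) ∧ ∀ j < m, hdist (c j) (c (j + 1)) = 1

/-- `a` and `b` are connected in `S`. -/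
def Connected (S : Set (Idx r)) (a b : Idx r) : Prop := ∃ m c, IsPath S a b m c

/-- The minimal path length `pl_S(a,b)`. -/
noncomputable def pl (S : Set (Idx r)) (a b : Idx r) : ℕ :=
  sInf {m | ∃ c, IsPath S a b m c}

/-- `S` is `t`-switchable. -/
def Switchable (t : ℕ) (S : Set (Idx r)) : Prop :=
  ∀ a ∈ S, ∀ b ∈ S, hdist a b = 2 → ∀ i : Fin n, (i : ℕ) < t →
    sw {i} a b ∈ S ∧ sw {i} b a ∈ S

/-- `S` is `t`-signed: `t`-switchable, and each connectedness class satisfies one of: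
constant first `t` coordinates, pairwise distance at most 1, or path-independent
parity of path lengths. -/
def Signed (t : ℕ) (S : Set (Idx r)) : Prop :=
  Switchable t S ∧
  ∀ a ∈ S,
    (∀ b c, Connected S a b → Connected S a c → ∀ i : Fin n, (i : ℕ) < t → b i = c i) ∨
    (∀ b c, Connected S a b → Connected S a c → hdist b c ≤ 1) ∨
    (∀ b c, Connected S a b → Connected S a c →
      ∀ m m' p p', IsPath S b c m p → IsPath S b c m' p' → m % 2 = m' % 2)

variable (k : Type*) [Field k]

/-- The generalized determinant `f_{i,a,b}`. -/
noncomputable def fdet (i : Fin n) (a b : Idx r) : MvPolynomial (Idx r) k :=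
  X a * X b - X (sw {i} a b) * X (sw {i} b a)

/-- The generalized permanent `g_{i,a,b}`. -/
noncomputable def gperm (i : Fin n) (a b : Idx r) : MvPolynomial (Idx r) k :=
  X a * X b + X (sw {i} a b) * X (sw {i} b a)

/-- The binomial `h_{S,K,a,b}`. -/
noncomputable def hbin (S : Set (Idx r)) (K : Finset (Fin n)) (a b : Idx r) :
    MvPolynomial (Idx r) k :=
  X a * X b - (-1) ^ (K.card * (pl S a b - 1)) * (X (sw K a b) * X (sw K b a))

/-- The slice permanental ideal `J^⟨t⟩`. -/
noncomputable def Jt (t : ℕ) : Ideal (MvPolynomial (Idx r) k) :=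
  Ideal.span {p | ∃ (a b : Idx r) (i : Fin n),
    hdist a b = 2 ∧ (i : ℕ) < t ∧ a i ≠ b i ∧ p = gperm k i a b}

/-- The ideal `J̃^⟨t⟩_S`. -/
noncomputable def Jtilde (t : ℕ) (S : Set (Idx r)) : Ideal (MvPolynomial (Idx r) k) :=
  Ideal.span {p | ∃ (a b : Idx r) (i : Fin n),
    Connected S a b ∧ (i : ℕ) < t ∧ a i ≠ b i ∧ p = hbin k S {i} a b}

/-- The ideal `Var^⟨t⟩_S = (x_a : a ∉ S)`. -/
noncomputable def VarIdeal (S : Set (Idx r)) : Ideal (MvPolynomial (Idx r) k) :=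
  Ideal.span {p | ∃ a ∉ S, p = X a}

/-- The ideal `Q^⟨t⟩_S = Var^⟨t⟩_S + J̃^⟨t⟩_S`. -/
noncomputable def Qideal (t : ℕ) (S : Set (Idx r)) : Ideal (MvPolynomial (Idx r) k) :=
  VarIdeal k S + Jtilde k t S

/-- The ideal `Ĵ^⟨t⟩`. -/
noncomputable def Jhat (t : ℕ) : Ideal (MvPolynomial (Idx r) k) :=
  Ideal.span {p | ∃ (a b : Idx r) (i : Fin n),
    hdist a b = 3 ∧ hdistT t a b = 3 ∧ (i : ℕ) < t ∧ a i ≠ b i ∧ p = gperm k i a b}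

/-- `S` is a maximal `t`-signed set. -/
noncomputable def MaximalSigned (t : ℕ) (S : Set (Idx r)) : Prop :=
  Signed t S ∧ ∀ T : Set (Idx r), Signed t T → S ⊆ T → Qideal k t S ≤ Qideal k t T

theorem minimal_exists_eq_iff {ι α : Type*} [PartialOrder α] {p : ι → Prop} {f : ι → α}
    {x : α} :
    Minimal (fun y => ∃ i, p i ∧ y = f i) x ↔
      ∃ i, p i ∧ x = f i ∧ ∀ j, p j → f j ≤ f i → f j = f i := by
  constructor
  · rintro ⟨⟨i, hi, rfl⟩, hmin⟩
    exact ⟨i, hi, rfl, fun j hj hle => le_antisymm hle (hmin ⟨j, hj, rfl⟩ hle)⟩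
  · rintro ⟨i, hi, rfl, hmin⟩
    exact ⟨⟨i, hi, rfl⟩, by rintro _ ⟨j, hj, rfl⟩ hle; exact (hmin j hj hle).ge⟩

namespace MvPolynomial

variable {σ R : Type*} [CommRing R]

theorem span_X_image_eq_ker (s : Set σ) :
    Ideal.span (X '' s : Set (MvPolynomial σ R)) =
      RingHom.ker (aeval (sᶜ.indicator (X : σ → MvPolynomial σ R))) := by
  set I := Ideal.span (X '' s : Set (MvPolynomial σ R))
  refine le_antisymm (Ideal.span_le.2 ?_) fun p hp => ?_
  · rintro _ ⟨a, ha, rfl⟩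
    simp [ha]
  have hretract :
      (Ideal.Quotient.mkₐ R I).comp (aeval (sᶜ.indicator X)) = Ideal.Quotient.mkₐ R I := by
    refine algHom_ext fun a => ?_
    by_cases ha : a ∈ s
    · simpa [ha, eq_comm] using Ideal.Quotient.eq_zero_iff_mem.2
        (Ideal.subset_span ⟨a, ha, rfl⟩ : X a ∈ I)
    · simp [ha]
  rw [← Ideal.Quotient.eq_zero_iff_mem, ← Ideal.Quotient.mkₐ_eq_mk R, ← hretract]
  simpa using congrArg (Ideal.Quotient.mk I) (RingHom.mem_ker.1 hp)

theorem isPrime_span_X_image [IsDomain R] (s : Set σ) :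
    (Ideal.span (X '' s : Set (MvPolynomial σ R))).IsPrime := by
  rw [span_X_image_eq_ker]
  exact RingHom.ker_isPrime _

theorem X_mem_span_X_image [Nontrivial R] {s : Set σ} {a : σ} :
    (X a : MvPolynomial σ R) ∈ Ideal.span (X '' s) ↔ a ∈ s := by
  rw [span_X_image_eq_ker, RingHom.mem_ker]
  by_cases ha : a ∈ s <;> simp [ha, X_ne_zero]

variable (R) in
noncomputable def edgeIdeal (E : σ → σ → Prop) : Ideal (MvPolynomial σ R) :=
  Ideal.span {X a * X b | (a) (b) (_ : E a b)}

theorem edgeIdeal_le_span_X_image_compl [Nontrivial R] {E : σ → σ → Prop} {S : Set σ}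
    (hS : ∀ a b, E a b → a ∉ S ∨ b ∉ S) : edgeIdeal R E ≤ Ideal.span (X '' Sᶜ) := by
  refine Ideal.span_le.2 ?_
  rintro _ ⟨a, b, hab, rfl⟩
  rcases hS a b hab with ha | hb
  · exact Ideal.mul_mem_right _ _ (X_mem_span_X_image.2 ha)
  · exact Ideal.mul_mem_left _ _ (X_mem_span_X_image.2 hb)

theorem span_X_image_setOf_mem_le (P : Ideal (MvPolynomial σ R)) :
    Ideal.span (X '' {a | X a ∈ P}) ≤ P :=
  Ideal.span_le.2 <| by rintro _ ⟨a, ha, rfl⟩; exact ha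

theorem mem_or_mem_of_edgeIdeal_le {E : σ → σ → Prop} {P : Ideal (MvPolynomial σ R)}
    (hP : P.IsPrime) (hle : edgeIdeal R E ≤ P) {a b : σ} (hab : E a b) : X a ∈ P ∨ X b ∈ P :=
  hP.mem_or_mem (hle (Ideal.subset_span ⟨a, b, hab, rfl⟩))

theorem mem_minimalPrimes_edgeIdeal_iff [IsDomain R] {E : σ → σ → Prop}
    {P : Ideal (MvPolynomial σ R)} :
    P ∈ (edgeIdeal R E).minimalPrimes ↔
      Minimal
        (fun Q => ∃ S : Set σ, (∀ a b, E a b → a ∉ S ∨ b ∉ S) ∧ Q = Ideal.span (X '' Sᶜ)) P := by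
  refine minimal_iff_minimal_of_imp_of_forall (P := fun Q => Q.IsPrime ∧ edgeIdeal R E ≤ Q)
    ?_ ?_
  · rintro _ ⟨S, hS, rfl⟩
    exact ⟨isPrime_span_X_image _, edgeIdeal_le_span_X_image_compl hS⟩
  · rintro Q ⟨hQ, hle⟩
    refine ⟨_, span_X_image_setOf_mem_le Q, {a | X a ∉ Q}, fun a b hab => ?_,
      by simp [Set.compl_ofPred]⟩
    simpa using mem_or_mem_of_edgeIdeal_le hQ hle hab

end MvPolynomial

section Switch

variable {K : Finset (Fin n)} {a b : Idx r} {x : Fin n}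

theorem sw_apply_ne_iff (K : Finset (Fin n)) (a b : Idx r) (x : Fin n) :
    sw K a b x ≠ sw K b a x ↔ a x ≠ b x := by
  by_cases hx : x ∈ K <;> simp [sw, hx, ne_comm]

theorem hdist_sw (K : Finset (Fin n)) (a b : Idx r) :
    hdist (sw K a b) (sw K b a) = hdist a b := by
  simp only [hdist, sw_apply_ne_iff]

theorem hdistT_sw (t : ℕ) (K : Finset (Fin n)) (a b : Idx r) :
    hdistT t (sw K a b) (sw K b a) = hdistT t a b := by
  simp only [hdistT, sw_apply_ne_iff]

@[simp]
theorem sw_empty (a b : Idx r) : sw ∅ a b = a := by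
  funext x
  simp [sw]

theorem sw_singleton_sw (hx : x ∉ K) (a b : Idx r) :
    sw {x} (sw K a b) (sw K b a) = sw (insert x K) a b := by
  funext y
  by_cases hy : y = x
  · subst hy
    simp [sw, hx]
  · simp [sw, hy]

theorem sw_eq_right (h : ∀ x, a x ≠ b x → x ∈ K) : sw K a b = b := by
  funext x
  by_cases hx : x ∈ K
  · simp [sw, hx]
  · simpa [sw, hx] using not_imp_comm.1 (h x) hx

theorem lt_of_hdistT_eq_hdist {t : ℕ} (h : hdistT t a b = hdist a b) (hx : a x ≠ b x) :
    (x : ℕ) < t := by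
  have hsub : (univ.filter fun i : Fin n => (i : ℕ) < t ∧ a i ≠ b i) ⊆
      univ.filter fun i => a i ≠ b i :=
    monotone_filter_right _ fun _ _ => And.right
  have heq := eq_of_subset_of_card_le hsub h.ge
  have hmem : x ∈ univ.filter fun i => a i ≠ b i := by simp [hx]
  rw [← heq, mem_filter] at hmem
  exact hmem.2.1

end Switch

section Jhat

variable {K : Finset (Fin n)} {a b : Idx r} {x : Fin n} {t : ℕ}

theorem gperm_sw (hx : x ∉ K) :
    gperm k x (sw K a b) (sw K b a) =
      X (sw K a b) * X (sw K b a) + X (sw (insert x K) a b) * X (sw (insert x K) b a) := by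
  rw [gperm, sw_singleton_sw hx, sw_singleton_sw hx]

theorem gperm_sw_mem_Jhat (hd : hdist a b = 3) (hdT : hdistT t a b = 3) (hx : a x ≠ b x)
    (K : Finset (Fin n)) : gperm k x (sw K a b) (sw K b a) ∈ Jhat k t :=
  Ideal.subset_span ⟨_, _, x, (hdist_sw K a b).trans hd, (hdistT_sw t K a b).trans hdT,
    lt_of_hdistT_eq_hdist (hdT.trans hd.symm) hx, (sw_apply_ne_iff K a b x).2 hx, rfl⟩

theorem X_mul_X_mem_Jhat (h2 : (2 : k) ≠ 0) (hd : hdist a b = 3) (hdT : hdistT t a b = 3) :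
    X a * X b ∈ Jhat k t := by
  obtain ⟨i, j, l, hij, hil, hjl, hD⟩ := card_eq_three.1 hd
  have hdiff : ∀ x, a x ≠ b x ↔ x ∈ ({i, j, l} : Finset (Fin n)) := fun x => by
    rw [← hD]; simp
  -- Switching `(a, b)` successively at `l`, `j`, `i` ends at `(b, a)`; the alternating sum of
  -- the three permanents along the way telescopes to `2 x_a x_b`.
  have hsum : gperm k l (sw ∅ a b) (sw ∅ b a) - gperm k j (sw {l} a b) (sw {l} b a)
      + gperm k i (sw {j, l} a b) (sw {j, l} b a) = C 2 * (X a * X b) := by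
    rw [gperm_sw k (notMem_empty l), gperm_sw k (by simpa using hjl),
      gperm_sw k (by simp [hij, hil]), insert_empty, sw_eq_right fun x => (hdiff x).1,
      sw_eq_right fun x hx => (hdiff x).1 (Ne.symm hx), sw_empty, sw_empty, map_ofNat]
    ring
  have hmem : C 2 * (X a * X b) ∈ Jhat k t := hsum ▸ Ideal.add_mem _
    (Ideal.sub_mem _ (gperm_sw_mem_Jhat k hd hdT ((hdiff l).2 (by simp)) _)
      (gperm_sw_mem_Jhat k hd hdT ((hdiff j).2 (by simp)) _))
    (gperm_sw_mem_Jhat k hd hdT ((hdiff i).2 (by simp)) _)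
  simpa [← mul_assoc, ← map_mul, h2] using Ideal.mul_mem_left _ (C (2 : k)⁻¹) hmem

theorem Jhat_eq_edgeIdeal (h2 : (2 : k) ≠ 0) (t : ℕ) :
    Jhat k t = edgeIdeal k (fun a b : Idx r => hdist a b = 3 ∧ hdistT t a b = 3) := by
  refine le_antisymm (Ideal.span_le.2 ?_) (Ideal.span_le.2 ?_)
  · rintro _ ⟨a, b, i, hd, hdT, -, -, rfl⟩
    exact Ideal.add_mem _ (Ideal.subset_span ⟨a, b, ⟨hd, hdT⟩, rfl⟩)
      (Ideal.subset_span ⟨_, _, ⟨(hdist_sw _ a b).trans hd, (hdistT_sw t _ a b).trans hdT⟩, rfl⟩)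
  · rintro _ ⟨a, b, ⟨hd, hdT⟩, rfl⟩
    exact X_mul_X_mem_Jhat k h2 hd hdT

end Jhat

theorem varIdeal_eq_span_X_image (S : Set (Idx r)) :
    VarIdeal k S = Ideal.span (X '' Sᶜ) := by
  simp only [VarIdeal, Set.image, Set.mem_compl_iff, eq_comm]

/-- the minimal primes over `Ĵ^⟨t⟩` are the minimal ideals among the
variable ideals of sets in `M̂`. -/
theorem stmt17 (h2 : (2 : k) ≠ 0) (t : ℕ) :
    ∀ P : Ideal (MvPolynomial (Idx r) k),
      P ∈ (Jhat k t).minimalPrimes ↔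
        ∃ S : Set (Idx r),
          (∀ a b : Idx r, hdist a b = 3 → hdistT t a b = 3 → a ∉ S ∨ b ∉ S) ∧
          P = VarIdeal k S ∧
          ∀ T : Set (Idx r),
            (∀ a b : Idx r, hdist a b = 3 → hdistT t a b = 3 → a ∉ T ∨ b ∉ T) →
            VarIdeal k T ≤ VarIdeal k S → VarIdeal k T = VarIdeal k S := by
  intro P
  rw [Jhat_eq_edgeIdeal k h2, mem_minimalPrimes_edgeIdeal_iff, minimal_exists_eq_iff]
  simp only [and_imp, varIdeal_eq_span_X_image]
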